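/- arXiv:2601.06556 — 6 statements merged into one kernel-verified Lean document; each statement's English description precedes it below -/
import Mathlib

section
/- Let λ₁ ≤ λ₂ ≤ ⋯ ≤ λ_N be real numbers with ∑_{i=1}^N λᵢ = Nλ̄ and λ̄ ≥ 0. Let θ ≥ 0 and let α be a positive integer with 1 ≤ α < N. If for every integer 1 ≤ k ≤ α one has λ₁ + ⋯ + λ_k ≥ -kθλ̄, then λ₁ ≥ -((α-1)N + α(N-1)θ)/(N-α) · λ̄. -/
/-!
Put `M = λ_{α+1}`. By monotonicity the `N - α` terms after position `α` are at least `M`, and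
the `α - 1` terms `λ₂, …, λ_α` are at most `M`. Eliminating `M` between these two bounds gives
`(N - 1) (λ₁ + ⋯ + λ_α) ≤ (N - α) λ₁ + (α - 1) N λ̄`, and the cone condition at `k = α` bounds
the left side from below by `-(N - 1) α θ λ̄`.
-/

open Finset

theorem sum_Icc_add_sum_Icc_succ {M : Type*} [AddCommMonoid M] (f : ℕ → M) {a m n : ℕ}
    (ham : a ≤ m + 1) (hmn : m ≤ n) :
    ∑ i ∈ Icc a m, f i + ∑ i ∈ Icc (m + 1) n, f i = ∑ i ∈ Icc a n, f i := by
  simp only [← Ico_add_one_right_eq_Icc]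
  exact sum_Ico_consecutive f ham (by omega)

theorem sub_one_mul_sum_Icc_le_of_monotoneOn {K : Type*} [Field K] [LinearOrder K]
    [IsStrictOrderedRing K] {lam : ℕ → K} {N α : ℕ} (hmono : MonotoneOn lam (Set.Icc 1 N))
    (hα1 : 1 ≤ α) (hαN : α < N) :
    ((N : K) - 1) * ∑ i ∈ Icc 1 α, lam i
      ≤ ((N : K) - α) * lam 1 + ((α : K) - 1) * ∑ i ∈ Icc 1 N, lam i := by
  set M := lam (α + 1)
  have mem {i : ℕ} (h1 : 1 ≤ i) (hN : i ≤ N) : i ∈ Set.Icc 1 N := ⟨h1, hN⟩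
  have tail : ((N : K) - α) * M ≤ ∑ i ∈ Icc (α + 1) N, lam i := by
    have h := card_nsmul_le_sum (Icc (α + 1) N) lam M fun i hi ↦
      have hi := mem_Icc.1 hi
      hmono (mem (by omega) (by omega)) (mem (by omega) hi.2) hi.1
    rwa [Nat.card_Icc, nsmul_eq_mul, show N + 1 - (α + 1) = N - α by omega,
      Nat.cast_sub hαN.le] at h
  have middle : ∑ i ∈ Icc 2 α, lam i ≤ ((α : K) - 1) * M := by
    have h := sum_le_card_nsmul (Icc 2 α) lam M fun i hi ↦
      have hi := mem_Icc.1 hi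
      hmono (mem (by omega) (by omega)) (mem (by omega) (by omega)) (by omega)
    rwa [Nat.card_Icc, nsmul_eq_mul, show α + 1 - 2 = α - 1 by omega, Nat.cast_sub hα1,
      Nat.cast_one] at h
  have hα1' : (1 : K) ≤ α := by exact_mod_cast hα1
  have hαN' : (α : K) < N := by exact_mod_cast hαN
  have eliminate_M : ((N : K) - α) * ∑ i ∈ Icc 2 α, lam i
      ≤ ((α : K) - 1) * ∑ i ∈ Icc (α + 1) N, lam i :=
    calc ((N : K) - α) * ∑ i ∈ Icc 2 α, lam i
        ≤ ((N : K) - α) * (((α : K) - 1) * M) := by gcongr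
      _ = ((α : K) - 1) * (((N : K) - α) * M) := by ring
      _ ≤ ((α : K) - 1) * ∑ i ∈ Icc (α + 1) N, lam i := by gcongr
  have split := sum_Icc_add_sum_Icc_succ lam (show 1 ≤ α + 1 by omega) hαN.le
  have head := sum_Icc_add_sum_Icc_succ lam (a := 1) (m := 1) (by omega) hα1
  rw [Icc_self, sum_singleton] at head
  rw [← split, ← head]
  linear_combination eliminate_M

theorem stmt_1_general (N α : ℕ) (hα1 : 1 ≤ α) (hαN : α < N)
    (lam : ℕ → ℝ) (lamBar θ : ℝ)
    (hmono : ∀ i j, 1 ≤ i → i ≤ j → j ≤ N → lam i ≤ lam j)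
    (hsum : ∑ i ∈ Finset.Icc 1 N, lam i = N * lamBar)
    (hcone : ∀ k, 1 ≤ k → k ≤ α → ∑ i ∈ Finset.Icc 1 k, lam i ≥ -(k * θ * lamBar)) :
    lam 1 ≥ -((((α : ℝ) - 1) * N + α * ((N : ℝ) - 1) * θ) / ((N : ℝ) - α)) * lamBar := by
  have hαN' : (α : ℝ) < N := by exact_mod_cast hαN
  have hα1' : (1 : ℝ) ≤ α := by exact_mod_cast hα1
  have key := sub_one_mul_sum_Icc_le_of_monotoneOn
    (fun i hi j hj hij ↦ hmono i j hi.1 hij hj.2) hα1 hαN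
  rw [hsum] at key
  have cone : ((N : ℝ) - 1) * -(α * θ * lamBar) ≤ ((N : ℝ) - 1) * ∑ i ∈ Icc 1 α, lam i :=
    mul_le_mul_of_nonneg_left (hcone α hα1 le_rfl) (by linarith)
  rw [ge_iff_le, neg_mul, neg_le, div_mul_eq_mul_div, le_div_iff₀ (by linarith)]
  linarith

theorem stmt_1 (N α : ℕ) (hN : 2 ≤ N) (hα1 : 1 ≤ α) (hαN : α < N)
    (lam : ℕ → ℝ) (lamBar θ : ℝ)
    (hmono : ∀ i j, 1 ≤ i → i ≤ j → j ≤ N → lam i ≤ lam j)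
    (hsum : ∑ i ∈ Finset.Icc 1 N, lam i = N * lamBar)
    (hbar : 0 ≤ lamBar) (hθ : 0 ≤ θ)
    (hcone : ∀ k, 1 ≤ k → k ≤ α → ∑ i ∈ Finset.Icc 1 k, lam i ≥ -(k * θ * lamBar)) :
    lam 1 ≥ -((((α : ℝ) - 1) * N + α * ((N : ℝ) - 1) * θ) / ((N : ℝ) - α)) * lamBar :=
  stmt_1_general N α hα1 hαN lam lamBar θ hmono hsum hcone
end

section
/- Let λ₁ ≤ λ₂ ≤ ⋯ ≤ λ_N be real numbers with ∑λᵢ = Nλ̄ and λ̄ ≥ 0. Let θ ≥ 0 and let α ∈ [1, N) be a real number with integer part [α]. If the cone condition (1/α)(∑_{i=1}^{[α]} λᵢ + (α - [α])λ_{[α]+1}) ≥ -θλ̄ holds, together with the cone conditions for all integer parameters 1 ≤ k ≤ [α], then λ₁ + ⋯ + λ_{[α]} ≥ -((α - [α])N + (N - [α])αθ)/(N - α) · λ̄. -/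
/-!
Write `m = [α]`, `S = λ₁ + ⋯ + λ_m`. By monotonicity the tail `λ_{m+1} + ⋯ + λ_N = Nλ̄ - S` is at
least `(N - m) λ_{m+1}`. Multiplying this by `α - m ≥ 0`, the fractional cone condition by
`N - m ≥ 0`, and adding eliminates `λ_{m+1}`, leaving `(N - α) S ≥ -((α - m) N + (N - m) α θ) λ̄`.
-/

open Finset

lemma sum_Icc_one_add_sum_Ioc {M : Type*} [AddCommMonoid M] (f : ℕ → M) {m n : ℕ}
    (hmn : m ≤ n) :
    ∑ i ∈ Icc 1 m, f i + ∑ i ∈ Ioc m n, f i = ∑ i ∈ Icc 1 n, f i := by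
  have hIcc (k : ℕ) : Icc 1 k = Ioc 0 k := Icc_add_one_left_eq_Ioc 0 k
  rw [hIcc, hIcc]
  exact sum_Ioc_consecutive f (Nat.zero_le m) hmn

lemma sub_mul_le_sum_Ioc {f : ℕ → ℝ} {m n : ℕ} (hmn : m ≤ n)
    (hmono : ∀ i ∈ Ioc m n, f (m + 1) ≤ f i) :
    ((n : ℝ) - m) * f (m + 1) ≤ ∑ i ∈ Ioc m n, f i := by
  have := card_nsmul_le_sum (Ioc m n) f (f (m + 1)) hmono
  rwa [Nat.card_Ioc, nsmul_eq_mul, Nat.cast_sub hmn] at this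

lemma sub_mul_ge_of_tail_ge_of_add_mul_ge {m α n S T x c : ℝ} (hmα : m ≤ α) (hαn : α ≤ n)
    (htail : (n - m) * x ≤ T - S) (hcone : S + (α - m) * x ≥ -c) :
    (n - α) * S ≥ -((α - m) * T + (n - m) * c) := by
  nlinarith [mul_le_mul_of_nonneg_left htail (sub_nonneg.2 hmα),
    mul_le_mul_of_nonneg_left hcone (sub_nonneg.2 (hmα.trans hαn))]

theorem stmt_2_general (N : ℕ) (α : ℝ) (hα1 : 1 ≤ α) (hαN : α < N)
    (lam : ℕ → ℝ) (lamBar θ : ℝ)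
    (hmono : ∀ i j, 1 ≤ i → i ≤ j → j ≤ N → lam i ≤ lam j)
    (hsum : ∑ i ∈ Finset.Icc 1 N, lam i = N * lamBar)
    (hconeFrac : ∑ i ∈ Finset.Icc 1 ⌊α⌋₊, lam i + (α - ⌊α⌋₊) * lam (⌊α⌋₊ + 1)
      ≥ -(α * θ * lamBar)) :
    ∑ i ∈ Finset.Icc 1 ⌊α⌋₊, lam i ≥
      -(((α - ⌊α⌋₊) * N + ((N : ℝ) - ⌊α⌋₊) * α * θ) / ((N : ℝ) - α)) * lamBar := by
  set m := ⌊α⌋₊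
  have hα0 : 0 ≤ α := zero_le_one.trans hα1
  have hmN : m < N := (Nat.floor_lt hα0).2 hαN
  have htail : ((N : ℝ) - m) * lam (m + 1) ≤ N * lamBar - ∑ i ∈ Icc 1 m, lam i := by
    rw [← hsum, ← sum_Icc_one_add_sum_Ioc lam hmN.le, add_sub_cancel_left]
    exact sub_mul_le_sum_Ioc hmN.le fun i hi =>
      hmono _ _ m.succ_pos (mem_Ioc.1 hi).1 (mem_Ioc.1 hi).2
  have key := sub_mul_ge_of_tail_ge_of_add_mul_ge (Nat.floor_le hα0) hαN.le htail hconeFrac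
  rw [ge_iff_le, neg_mul, div_mul_eq_mul_div, ← neg_div, div_le_iff₀ (sub_pos.2 hαN)]
  linarith

theorem stmt_2 (N : ℕ) (hN : 2 ≤ N) (α : ℝ) (hα1 : 1 ≤ α) (hαN : α < N)
    (lam : ℕ → ℝ) (lamBar θ : ℝ)
    (hmono : ∀ i j, 1 ≤ i → i ≤ j → j ≤ N → lam i ≤ lam j)
    (hsum : ∑ i ∈ Finset.Icc 1 N, lam i = N * lamBar)
    (hbar : 0 ≤ lamBar) (hθ : 0 ≤ θ)
    (hconeInt : ∀ k, 1 ≤ k → k ≤ ⌊α⌋₊ →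
      ∑ i ∈ Finset.Icc 1 k, lam i ≥ -((k : ℝ) * θ * lamBar))
    (hconeFrac : ∑ i ∈ Finset.Icc 1 ⌊α⌋₊, lam i + (α - ⌊α⌋₊) * lam (⌊α⌋₊ + 1)
      ≥ -(α * θ * lamBar)) :
    ∑ i ∈ Finset.Icc 1 ⌊α⌋₊, lam i ≥
      -(((α - ⌊α⌋₊) * N + ((N : ℝ) - ⌊α⌋₊) * α * θ) / ((N : ℝ) - α)) * lamBar :=
  stmt_2_general N α hα1 hαN lam lamBar θ hmono hsum hconeFrac
end

section
/- Let λ₁ ≤ λ₂ ≤ ⋯ ≤ λ_N be real numbers with ∑λᵢ = Nλ̄, λ̄ ≥ 0, θ ≥ 0, and let α ∈ [1, N) be a real number satisfying the cone condition ∑_{i=1}^{[α]} λᵢ + (α - [α])λ_{[α]+1} ≥ -αθλ̄, where the cone condition also holds with α replaced by each integer 1 ≤ k ≤ [α]. Then λ₁ ≥ -((α-1)N + α(N-1)θ)/(N-α) · λ̄. -/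
/-!
Write `μ = λ_{m+1}` with `m = [α]`. Monotonicity bounds the tail `λ_{m+1} + ⋯ + λ_N` below by
`(N - m) μ`, so the fractional cone condition and `∑ λᵢ = N λ̄` give `(N - α) μ ≤ (N + αθ) λ̄`.
It also bounds `λ₂ + ⋯ + λ_m` above by `(m - 1) μ`, so the same cone condition gives
`λ₁ ≥ -αθλ̄ - (α - 1) μ`. Eliminating `μ` yields the bound on `λ₁`.
-/

open Finset

section MonotoneSums

variable {lam : ℕ → ℝ} {N m : ℕ}

lemma card_mul_le_sum_Ioc_of_monotoneOn (hmono : MonotoneOn lam (Set.Icc 1 N)) (hmN : m < N) :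
    ((N : ℝ) - m) * lam (m + 1) ≤ ∑ i ∈ Ioc m N, lam i := by
  have h := card_nsmul_le_sum (Ioc m N) lam (lam (m + 1)) fun i hi => by
    obtain ⟨hmi, hiN⟩ := mem_Ioc.mp hi
    exact hmono ⟨by omega, by omega⟩ ⟨by omega, hiN⟩ (by omega)
  rwa [Nat.card_Ioc, nsmul_eq_mul, Nat.cast_sub hmN.le] at h

lemma sum_Icc_le_of_monotoneOn (hmono : MonotoneOn lam (Set.Icc 1 N)) (hm1 : 1 ≤ m)
    (hmN : m < N) : ∑ i ∈ Icc 1 m, lam i ≤ lam 1 + ((m : ℝ) - 1) * lam (m + 1) := by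
  have h := sum_le_card_nsmul (Ioc 1 m) lam (lam (m + 1)) fun i hi => by
    obtain ⟨h1i, him⟩ := mem_Ioc.mp hi
    exact hmono ⟨by omega, by omega⟩ ⟨by omega, by omega⟩ (by omega)
  rw [Nat.card_Ioc, nsmul_eq_mul, Nat.cast_sub hm1, Nat.cast_one] at h
  rw [← sum_Ioc_add_eq_sum_Icc hm1]
  linarith

lemma sum_Icc_eq_sum_Icc_add_sum_Ioc (hm : m ≤ N) :
    ∑ i ∈ Icc 1 N, lam i = ∑ i ∈ Icc 1 m, lam i + ∑ i ∈ Ioc m N, lam i := by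
  have hIoc (k : ℕ) : Icc 1 k = Ioc 0 k := Icc_add_one_left_eq_Ioc 0 k
  rw [hIoc, hIoc, sum_Ioc_consecutive lam (Nat.zero_le m) hm]

variable {α c : ℝ}

lemma sub_mul_le_sum_add_of_cone (hmono : MonotoneOn lam (Set.Icc 1 N)) (hmN : m < N)
    (hcone : ∑ i ∈ Icc 1 m, lam i + (α - m) * lam (m + 1) ≥ -c) :
    ((N : ℝ) - α) * lam (m + 1) ≤ ∑ i ∈ Icc 1 N, lam i + c := by
  rw [sum_Icc_eq_sum_Icc_add_sum_Ioc hmN.le]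
  linarith [card_mul_le_sum_Ioc_of_monotoneOn hmono hmN]

lemma neg_sub_mul_le_apply_one_of_cone (hmono : MonotoneOn lam (Set.Icc 1 N)) (hm1 : 1 ≤ m)
    (hmN : m < N) (hcone : ∑ i ∈ Icc 1 m, lam i + (α - m) * lam (m + 1) ≥ -c) :
    -c - (α - 1) * lam (m + 1) ≤ lam 1 := by
  linarith [sum_Icc_le_of_monotoneOn hmono hm1 hmN]

end MonotoneSums

theorem stmt_3_general (N : ℕ) (α : ℝ) (hα1 : 1 ≤ α) (hαN : α < N)
    (lam : ℕ → ℝ) (lamBar θ : ℝ)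
    (hmono : ∀ i j, 1 ≤ i → i ≤ j → j ≤ N → lam i ≤ lam j)
    (hsum : ∑ i ∈ Finset.Icc 1 N, lam i = N * lamBar)
    (hconeFrac : ∑ i ∈ Finset.Icc 1 ⌊α⌋₊, lam i + (α - ⌊α⌋₊) * lam (⌊α⌋₊ + 1)
      ≥ -(α * θ * lamBar)) :
    lam 1 ≥ -(((α - 1) * N + α * ((N : ℝ) - 1) * θ) / ((N : ℝ) - α)) * lamBar := by
  have hmonoOn : MonotoneOn lam (Set.Icc 1 N) := fun i hi j hj hij => hmono i j hi.1 hij hj.2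
  have hm1 : 1 ≤ ⌊α⌋₊ := Nat.le_floor (by exact_mod_cast hα1)
  have hmN : ⌊α⌋₊ < N := (Nat.floor_lt (by linarith)).mpr hαN
  have hμ := sub_mul_le_sum_add_of_cone hmonoOn hmN hconeFrac
  have hlam1 := neg_sub_mul_le_apply_one_of_cone hmonoOn hm1 hmN hconeFrac
  rw [hsum] at hμ
  have hNα : 0 < (N : ℝ) - α := by linarith
  rw [ge_iff_le, ← neg_div, div_mul_eq_mul_div, div_le_iff₀ hNα]
  nlinarith [mul_le_mul_of_nonneg_left hμ (sub_nonneg.2 hα1),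
    mul_le_mul_of_nonneg_right hlam1 hNα.le]

theorem stmt_3 (N : ℕ) (hN : 2 ≤ N) (α : ℝ) (hα1 : 1 ≤ α) (hαN : α < N)
    (lam : ℕ → ℝ) (lamBar θ : ℝ)
    (hmono : ∀ i j, 1 ≤ i → i ≤ j → j ≤ N → lam i ≤ lam j)
    (hsum : ∑ i ∈ Finset.Icc 1 N, lam i = N * lamBar)
    (hbar : 0 ≤ lamBar) (hθ : 0 ≤ θ)
    (hconeInt : ∀ k, 1 ≤ k → k ≤ ⌊α⌋₊ →
      ∑ i ∈ Finset.Icc 1 k, lam i ≥ -((k : ℝ) * θ * lamBar))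
    (hconeFrac : ∑ i ∈ Finset.Icc 1 ⌊α⌋₊, lam i + (α - ⌊α⌋₊) * lam (⌊α⌋₊ + 1)
      ≥ -(α * θ * lamBar)) :
    lam 1 ≥ -(((α - 1) * N + α * ((N : ℝ) - 1) * θ) / ((N : ℝ) - α)) * lamBar :=
  stmt_3_general N α hα1 hαN lam lamBar θ hmono hsum hconeFrac
end

section
/- Let N ≥ 2 be an integer and A ≥ 0 a real number. Define F(x) = ∑_{i=1}^N xᵢ³ - (3 - (N-2)/(N-1))(1+A)∑_{i=1}^N xᵢ² + (1+A)³N²/(N-1) on the set of x = (x₁,…,x_N) with xᵢ ≥ 0 for all i and ∑_{i=1}^N xᵢ = N(1+A). Then F(x) ≥ 0 for all such x. -/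
/-!
Put `s = 1 + A` and `d = x - s`, so that `∑ d = 0`, `d ≥ -s`, and the expression equals
`((N - 2) s ∑ d² + (N - 1) ∑ d³) / (N - 1)`. The positive entries of `d` occupy at most `N - 1`
indices (the minimum of `d` is `≤ 0`), so by the power mean inequality their contribution is at
least `((N - 2) s P² + P³) / (N - 1)`, where `P` is their sum. The negative entries have total
mass `P` and size at most `m = -min d`, with `m ≤ s` and `m ≤ P`; they cost at most
`max((N - 1) m - (N - 2) s, 0) m P`, which the positive contribution absorbs.
-/

open Finset

namespace Finset

variable {ι : Type*} {s : Finset ι} {f : ι → ℝ}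

lemma sum_pow_succ_le_mul_sum_pow {m : ℝ} (hf : ∀ i ∈ s, 0 ≤ f i) (hfm : ∀ i ∈ s, f i ≤ m)
    (k : ℕ) : ∑ i ∈ s, f i ^ (k + 1) ≤ m * ∑ i ∈ s, f i ^ k := by
  rw [mul_sum]
  refine sum_le_sum fun i hi => ?_
  rw [pow_succ']
  exact mul_le_mul_of_nonneg_right (hfm i hi) (pow_nonneg (hf i hi) k)

lemma pow_sum_le_mul_sum_pow {c : ℝ} (hf : ∀ i ∈ s, 0 ≤ f i) (hc : (#s : ℝ) ≤ c) (k : ℕ) :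
    (∑ i ∈ s, f i) ^ (k + 1) ≤ c ^ k * ∑ i ∈ s, f i ^ (k + 1) := by
  refine (pow_sum_le_card_mul_sum_pow hf k).trans ?_
  gcongr
  exact sum_nonneg fun i hi => pow_nonneg (hf i hi) _

lemma mul_sq_sum_add_cube_sum_le {c t : ℝ} (hf : ∀ i ∈ s, 0 ≤ f i) (hc : (#s : ℝ) ≤ c)
    (ht : 0 ≤ t) :
    t * (∑ i ∈ s, f i) ^ 2 + (∑ i ∈ s, f i) ^ 3
      ≤ c * (t * ∑ i ∈ s, f i ^ 2 + c * ∑ i ∈ s, f i ^ 3) := by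
  have h₂ : (∑ i ∈ s, f i) ^ 2 ≤ c * ∑ i ∈ s, f i ^ 2 := by
    simpa using pow_sum_le_mul_sum_pow hf hc 1
  have h₃ : (∑ i ∈ s, f i) ^ 3 ≤ c ^ 2 * ∑ i ∈ s, f i ^ 3 := pow_sum_le_mul_sum_pow hf hc 2
  nlinarith [mul_le_mul_of_nonneg_left h₂ ht]

lemma neg_max_mul_sum_le_mul_sum_sq_sub_mul_sum_cube {c m t : ℝ} (hf : ∀ i ∈ s, 0 ≤ f i)
    (hfm : ∀ i ∈ s, f i ≤ m) (hc : 0 ≤ c) :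
    -(max (c * m - t) 0 * (m * ∑ i ∈ s, f i))
      ≤ t * ∑ i ∈ s, f i ^ 2 - c * ∑ i ∈ s, f i ^ 3 := by
  have h₂ : ∑ i ∈ s, f i ^ 2 ≤ m * ∑ i ∈ s, f i := by
    simpa using sum_pow_succ_le_mul_sum_pow hf hfm 1
  have h₃ : ∑ i ∈ s, f i ^ 3 ≤ m * ∑ i ∈ s, f i ^ 2 := sum_pow_succ_le_mul_sum_pow hf hfm 2
  have h₀ : 0 ≤ ∑ i ∈ s, f i ^ 2 := sum_nonneg fun i _ => sq_nonneg _
  rcases max_cases (c * m - t) 0 with ⟨hmax, hcm⟩ | ⟨hmax, hcm⟩ <;> rw [hmax]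
  · nlinarith [mul_le_mul_of_nonneg_left h₂ hcm, mul_le_mul_of_nonneg_left h₃ hc]
  · nlinarith [mul_le_mul_of_nonneg_left h₃ hc]

end Finset

lemma sum_cube_sub_mul_sum_sq_add_eq {ι : Type*} [Fintype ι] {x : ι → ℝ} {s : ℝ}
    (hsum : ∑ i, x i = Fintype.card ι * s) (hn : (Fintype.card ι : ℝ) ≠ 1) :
    ∑ i, x i ^ 3 - (3 - ((Fintype.card ι : ℝ) - 2) / ((Fintype.card ι : ℝ) - 1)) * s * ∑ i, x i ^ 2
        + s ^ 3 * (Fintype.card ι : ℝ) ^ 2 / ((Fintype.card ι : ℝ) - 1)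
      = (((Fintype.card ι : ℝ) - 2) * s * ∑ i, (x i - s) ^ 2
          + ((Fintype.card ι : ℝ) - 1) * ∑ i, (x i - s) ^ 3) / ((Fintype.card ι : ℝ) - 1) := by
  have h₁ : ∑ i, (x i - s) = 0 := by simp [sum_sub_distrib, hsum]
  have h₂ : ∑ i, x i ^ 2 = ∑ i, (x i - s) ^ 2 + Fintype.card ι * s ^ 2 := by
    simp_rw [show ∀ i, x i ^ 2 = (x i - s) ^ 2 + 2 * s * (x i - s) + s ^ 2 from fun i => by ring,
      sum_add_distrib, ← mul_sum, h₁, sum_const, card_univ, nsmul_eq_mul]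
    ring
  have h₃ : ∑ i, x i ^ 3 = ∑ i, (x i - s) ^ 3 + 3 * s * ∑ i, (x i - s) ^ 2
      + Fintype.card ι * s ^ 3 := by
    simp_rw [show ∀ i, x i ^ 3 = (x i - s) ^ 3 + 3 * s * (x i - s) ^ 2 + 3 * s ^ 2 * (x i - s)
      + s ^ 3 from fun i => by ring, sum_add_distrib, ← mul_sum, h₁, sum_const, card_univ,
      nsmul_eq_mul]
    ring
  rw [h₂, h₃]
  field_simp [sub_ne_zero.2 hn]
  ring

lemma sub_one_mul_max_mul_le {n s m P : ℝ} (hn : 2 ≤ n) (hm₀ : 0 ≤ m) (hms : m ≤ s)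
    (hmP : m ≤ P) :
    (n - 1) * (max ((n - 1) * m - (n - 2) * s) 0 * m) ≤ (n - 2) * s * P + P ^ 2 := by
  have hs₀ : 0 ≤ (n - 2) * s := mul_nonneg (by linarith) (hm₀.trans hms)
  rcases max_cases ((n - 1) * m - (n - 2) * s) 0 with ⟨hmax, -⟩ | ⟨hmax, -⟩ <;> rw [hmax]
  · have hn₀ : 0 ≤ n * (n - 2) := mul_nonneg (by linarith) (by linarith)
    nlinarith [mul_nonneg hs₀ (sub_nonneg.2 hmP),
      mul_nonneg (mul_nonneg hn₀ hm₀) (sub_nonneg.2 hms)]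
  · nlinarith [hm₀.trans hmP]

theorem card_sub_two_mul_sum_sq_add_card_sub_one_mul_sum_cube_nonneg {ι : Type*} [Fintype ι]
    (hn : 2 ≤ Fintype.card ι) {s : ℝ} {d : ι → ℝ} (hd : ∀ i, -s ≤ d i) (h0 : ∑ i, d i = 0) :
    0 ≤ ((Fintype.card ι : ℝ) - 2) * s * ∑ i, d i ^ 2
      + ((Fintype.card ι : ℝ) - 1) * ∑ i, d i ^ 3 := by
  have hn₂ : (2 : ℝ) ≤ Fintype.card ι := by exact_mod_cast hn
  obtain ⟨i₀, -, hi₀⟩ :=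
    univ.exists_min_image d (univ_nonempty_iff.2 (Fintype.card_pos_iff.1 (by omega)))
  set m := -d i₀
  have hm₀ : 0 ≤ m := by
    have := card_nsmul_le_sum univ d (d i₀) fun i _ => hi₀ i (mem_univ i)
    rw [h0, nsmul_eq_mul, card_univ] at this
    nlinarith
  have hms : m ≤ s := by linarith [hd i₀]
  set pos := univ.filter (fun i => 0 < d i)
  set neg := univ.filter (fun i => ¬ 0 < d i)
  have hsplit (k : ℕ) : ∑ i, d i ^ k = ∑ i ∈ pos, d i ^ k + ∑ i ∈ neg, d i ^ k :=
    (sum_filter_add_sum_filter_not _ _ _).symm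
  set P := ∑ i ∈ pos, d i
  have hnegP : ∑ i ∈ neg, -d i = P := by
    have := hsplit 1
    simp only [pow_one, h0] at this
    rw [sum_neg_distrib]; linarith
  have hpos₀ : ∀ i ∈ pos, 0 ≤ d i := fun i hi => (mem_filter.1 hi).2.le
  have hpos_card : (#pos : ℝ) ≤ Fintype.card ι - 1 := by
    have : #pos < Fintype.card ι := card_lt_univ_of_notMem (x := i₀) (by simp [pos]; linarith)
    have : (#pos : ℝ) + 1 ≤ Fintype.card ι := by exact_mod_cast this
    linarith
  have hneg₀ : ∀ i ∈ neg, 0 ≤ -d i := fun i hi => by simpa using (mem_filter.1 hi).2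
  have hnegm : ∀ i ∈ neg, -d i ≤ m := fun i _ => by linarith [hi₀ i (mem_univ i)]
  have hmP : m ≤ P := by
    rw [← hnegP]
    exact single_le_sum hneg₀ (by simp [neg]; linarith)
  set n : ℝ := ((Fintype.card ι : ℕ) : ℝ)
  have hs₀ : 0 ≤ (n - 2) * s := mul_nonneg (by linarith) (hm₀.trans hms)
  have hpos := mul_sq_sum_add_cube_sum_le hpos₀ hpos_card hs₀
  have hneg := neg_max_mul_sum_le_mul_sum_sq_sub_mul_sum_cube (c := n - 1) (t := (n - 2) * s)
    hneg₀ hnegm (by linarith)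
  simp only [hnegP, neg_sq, Odd.neg_pow (by decide : Odd 3), sum_neg_distrib] at hneg
  have hM := sub_one_mul_max_mul_le hn₂ hm₀ hms hmP
  rw [hsplit 2, hsplit 3]
  nlinarith [mul_le_mul_of_nonneg_left hM (hm₀.trans hmP)]

theorem stmt_4_general (N : ℕ) (hN : 2 ≤ N) (A : ℝ)
    (x : Fin N → ℝ) (hx : ∀ i, 0 ≤ x i)
    (hsum : ∑ i, x i = N * (1 + A)) :
    0 ≤ ∑ i, (x i) ^ 3
        - (3 - ((N : ℝ) - 2) / ((N : ℝ) - 1)) * (1 + A) * ∑ i, (x i) ^ 2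
        + (1 + A) ^ 3 * (N : ℝ) ^ 2 / ((N : ℝ) - 1) := by
  have hN₁ : (1 : ℝ) < N := by exact_mod_cast hN
  have key := card_sub_two_mul_sum_sq_add_card_sub_one_mul_sum_cube_nonneg
    (s := 1 + A) (d := fun i => x i - (1 + A)) (by simpa using hN)
    (fun i => by linarith [hx i]) (by simp [sum_sub_distrib, hsum]; ring)
  have hF := sum_cube_sub_mul_sum_sq_add_eq (x := x) (s := 1 + A) (by simpa using hsum)
    (by simpa using hN₁.ne')
  rw [Fintype.card_fin] at key hF
  rw [hF]
  exact div_nonneg key (by linarith)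

theorem stmt_4 (N : ℕ) (hN : 2 ≤ N) (A : ℝ) (hA : 0 ≤ A)
    (x : Fin N → ℝ) (hx : ∀ i, 0 ≤ x i)
    (hsum : ∑ i, x i = N * (1 + A)) :
    0 ≤ ∑ i, (x i) ^ 3
        - (3 - ((N : ℝ) - 2) / ((N : ℝ) - 1)) * (1 + A) * ∑ i, (x i) ^ 2
        + (1 + A) ^ 3 * (N : ℝ) ^ 2 / ((N : ℝ) - 1) :=
  stmt_4_general N hN A x hx hsum
end

section
/- Let w₁, …, w_N ≥ 0 be real numbers, and let λ₁ ≤ λ₂ ≤ ⋯ ≤ λ_N be real numbers. Let m be an integer with 1 ≤ m < N, t ∈ [0,1), and set α = m + t. Let W* = max₁≤j≤N wⱼ. Then ∑_{j=1}^N λⱼwⱼ ≥ W*·(∑_{j=1}^m λⱼ + tλ_{m+1}) + λ_{m+1}·(∑_{j=1}^N wⱼ - αW*), provided ∑_{j=1}^N wⱼ ≥ αW*. -/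
/-!
Compare termwise with the threshold `c = λ_{m+1}`: for `j ≤ m` one has
`(c - λⱼ)(W* - wⱼ) ≥ 0`, i.e. `λⱼ wⱼ ≥ λⱼ W* + c (wⱼ - W*)`, and for `j > m` one has `λⱼ wⱼ ≥ c wⱼ`.
Summing gives `∑ λⱼ wⱼ ≥ W* ∑_{j ≤ m} λⱼ + c (∑ wⱼ - m W*)`, which is the right-hand side
rewritten, since the two `t c W*` terms cancel.
-/

open Finset

section

variable {ι : Type*} (lam w : ι → ℝ) (c W : ℝ)

theorem sum_head_le_sum_mul (s : Finset ι) (hlam : ∀ j ∈ s, lam j ≤ c) (hw : ∀ j ∈ s, w j ≤ W) :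
    W * ∑ j ∈ s, lam j + c * (∑ j ∈ s, w j - #s * W) ≤ ∑ j ∈ s, lam j * w j := by
  have key : ∑ j ∈ s, (lam j * W + c * (w j - W)) ≤ ∑ j ∈ s, lam j * w j :=
    sum_le_sum fun j hj => by nlinarith [mul_nonneg (sub_nonneg.2 (hlam j hj)) (sub_nonneg.2 (hw j hj))]
  simpa only [sum_add_distrib, ← sum_mul, ← mul_sum, sum_sub_distrib, sum_const, nsmul_eq_mul,
    mul_comm W] using key

theorem mul_sum_tail_le_sum_mul (s : Finset ι) (hlam : ∀ j ∈ s, c ≤ lam j) (hw : ∀ j ∈ s, 0 ≤ w j) :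
    c * ∑ j ∈ s, w j ≤ ∑ j ∈ s, lam j * w j := by
  rw [mul_sum]
  exact sum_le_sum fun j hj => mul_le_mul_of_nonneg_right (hlam j hj) (hw j hj)

theorem mul_sum_add_le_sum_mul_of_disjoint [DecidableEq ι] (s u : Finset ι) (hsu : Disjoint s u)
    (hlam_s : ∀ j ∈ s, lam j ≤ c) (hlam_u : ∀ j ∈ u, c ≤ lam j)
    (hw_s : ∀ j ∈ s, w j ≤ W) (hw_u : ∀ j ∈ u, 0 ≤ w j) :
    W * ∑ j ∈ s, lam j + c * (∑ j ∈ s ∪ u, w j - #s * W) ≤ ∑ j ∈ s ∪ u, lam j * w j := by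
  rw [sum_union hsu, sum_union hsu]
  linarith [sum_head_le_sum_mul lam w c W s hlam_s hw_s,
    mul_sum_tail_le_sum_mul lam w c u hlam_u hw_u]

end

theorem stmt_9_general (N m : ℕ) (hmN : m < N)
    (t : ℝ)
    (w lam : ℕ → ℝ) (Wstar : ℝ)
    (hw : ∀ j, 1 ≤ j → j ≤ N → 0 ≤ w j)
    (hmono : ∀ i j, 1 ≤ i → i ≤ j → j ≤ N → lam i ≤ lam j)
    (hWub : ∀ j, 1 ≤ j → j ≤ N → w j ≤ Wstar) :
    ∑ j ∈ Finset.Icc 1 N, lam j * w j ≥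
      Wstar * (∑ j ∈ Finset.Icc 1 m, lam j + t * lam (m + 1))
      + lam (m + 1) * (∑ j ∈ Finset.Icc 1 N, w j - ((m : ℝ) + t) * Wstar) := by
  have hunion : Icc 1 m ∪ Icc (m + 1) N = Icc 1 N := by
    ext j; simp only [mem_union, mem_Icc]; omega
  have hdisj : Disjoint (Icc 1 m) (Icc (m + 1) N) :=
    disjoint_left.2 fun j hj hj' => by simp only [mem_Icc] at hj hj'; omega
  have h := mul_sum_add_le_sum_mul_of_disjoint lam w (lam (m + 1)) Wstar _ _ hdisj
    (fun j hj => by simp only [mem_Icc] at hj; exact hmono j (m + 1) hj.1 (by omega) hmN)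
    (fun j hj => by simp only [mem_Icc] at hj; exact hmono (m + 1) j (by omega) hj.1 hj.2)
    (fun j hj => by simp only [mem_Icc] at hj; exact hWub j hj.1 (by omega))
    (fun j hj => by simp only [mem_Icc] at hj; exact hw j (by omega) hj.2)
  rw [hunion, Nat.card_Icc, Nat.add_sub_cancel] at h
  linarith

theorem stmt_9 (N m : ℕ) (hm1 : 1 ≤ m) (hmN : m < N)
    (t : ℝ) (ht0 : 0 ≤ t) (ht1 : t < 1)
    (w lam : ℕ → ℝ) (Wstar : ℝ)
    (hw : ∀ j, 1 ≤ j → j ≤ N → 0 ≤ w j)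
    (hmono : ∀ i j, 1 ≤ i → i ≤ j → j ≤ N → lam i ≤ lam j)
    (hWub : ∀ j, 1 ≤ j → j ≤ N → w j ≤ Wstar)
    (hWmem : ∃ j, 1 ≤ j ∧ j ≤ N ∧ w j = Wstar)
    (hwsum : ∑ j ∈ Finset.Icc 1 N, w j ≥ ((m : ℝ) + t) * Wstar) :
    ∑ j ∈ Finset.Icc 1 N, lam j * w j ≥
      Wstar * (∑ j ∈ Finset.Icc 1 m, lam j + t * lam (m + 1))
      + lam (m + 1) * (∑ j ∈ Finset.Icc 1 N, w j - ((m : ℝ) + t) * Wstar) :=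
  stmt_9_general N m hmN t w lam Wstar hw hmono hWub
end

section
/- Let n = 4 or n = 5, N = (n+2)(n-1)/2, and let λ₁ ≤ ⋯ ≤ λ_N be real numbers with average λ̄ ≥ 0 satisfying λⱼ ≥ -Aλ̄ for all j, where A = ((α-1)N + α(N-1)θ)/(N-α), θ = (n-1)((n+2)(n+5) - (3n+8)α)/(3α(n+3)(n-2)), and 1 ≤ α ≤ (n+2)(n+5)/(3n+8). Then 8∑λⱼ³ + (8(n-4)/3)λ̄∑λⱼ² - (4(n+2)(n-1)²/3)λ̄³ ≥ 0. -/
/-!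
Put `t = λ̄`, `c = (n - 4) t / 3` and `g z = z³ + c z²`; the claim is `N g(t) ≤ ∑ g(λⱼ)`, since
`8 N g(t) = 4 (n + 2) (n - 1)² t³ / 3`. For every `a`, `g` differs from
`φₐ z = (z - a)² (z + c + 2a)` by an affine function, so under `∑ λⱼ = N t` the defect
`∑ g(λⱼ) - N g(t)` equals `∑ φₐ(λⱼ) - N φₐ(t)`, and `φₐ ≥ 0` on `[-(c + 2a), ∞)`.
If every `λⱼ ≥ -(c + 2t)`, take `a = t`, so that `φₐ(t) = 0`. Otherwise some `λₖ` lies in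
`[-A t, -(c + 2t))`; a tangent point `a > t` with `c + 2a ≥ A t` keeps all terms nonnegative,
and is chosen so that the single term `φₐ(λₖ)` already dominates `N φₐ(t)`.
The constant `A` does not depend on `α`: it is `17/7` for `n = 4` and `47/18` for `n = 5`.
-/

open Finset

section TangentCubic

variable {ι : Type*} (s : Finset ι) (x : ι → ℝ) (t c a : ℝ)

theorem sum_cube_add_sq_sub_card_mul_eq (hsum : ∑ i ∈ s, x i = #s * t) :
    (∑ i ∈ s, x i ^ 3 + c * ∑ i ∈ s, x i ^ 2) - #s * (t ^ 3 + c * t ^ 2) =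
      ∑ i ∈ s, (x i - a) ^ 2 * (x i + (c + 2 * a)) - #s * ((t - a) ^ 2 * (t + (c + 2 * a))) := by
  have hsplit : ∀ z : ℝ, (z - a) ^ 2 * (z + (c + 2 * a)) =
      z ^ 3 + c * z ^ 2 - (3 * a ^ 2 + 2 * a * c) * z + a ^ 2 * (c + 2 * a) := fun z => by ring
  simp only [hsplit, sum_add_distrib, sum_sub_distrib, ← mul_sum, hsum, sum_const, nsmul_eq_mul]
  ring

theorem card_mul_le_sum_cube_add_sq {k : ι} (hsum : ∑ i ∈ s, x i = #s * t)
    (hlow : ∀ i ∈ s, -(c + 2 * a) ≤ x i) (hk : k ∈ s)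
    (hdom : #s * ((t - a) ^ 2 * (t + (c + 2 * a))) ≤ (x k - a) ^ 2 * (x k + (c + 2 * a))) :
    #s * (t ^ 3 + c * t ^ 2) ≤ ∑ i ∈ s, x i ^ 3 + c * ∑ i ∈ s, x i ^ 2 := by
  rw [← sub_nonneg, sum_cube_add_sq_sub_card_mul_eq s x t c a hsum, sub_nonneg]
  have hnonneg : ∀ i ∈ s, 0 ≤ (x i - a) ^ 2 * (x i + (c + 2 * a)) := fun i hi =>
    mul_nonneg (sq_nonneg _) (by linarith [hlow i hi])
  exact hdom.trans (single_le_sum hnonneg hk)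

theorem card_mul_le_sum_cube_add_sq_of_le {m : ℝ} (hsum : ∑ i ∈ s, x i = #s * t)
    (hs : s.Nonempty) (hlow : ∀ i ∈ s, m ≤ x i) (hm : -(c + 2 * a) ≤ m)
    (hdom : ∀ y, m ≤ y → y < -(c + 2 * t) →
      #s * ((t - a) ^ 2 * (t + (c + 2 * a))) ≤ (y - a) ^ 2 * (y + (c + 2 * a))) :
    #s * (t ^ 3 + c * t ^ 2) ≤ ∑ i ∈ s, x i ^ 3 + c * ∑ i ∈ s, x i ^ 2 := by
  by_cases hnear : ∀ i ∈ s, -(c + 2 * t) ≤ x i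
  · obtain ⟨k, hk⟩ := hs
    refine card_mul_le_sum_cube_add_sq s x t c t hsum hnear hk ?_
    rw [sub_self, zero_pow two_ne_zero, zero_mul, mul_zero]
    exact mul_nonneg (sq_nonneg _) (by linarith [hnear k hk])
  · push Not at hnear
    obtain ⟨k, hk, hfar⟩ := hnear
    exact card_mul_le_sum_cube_add_sq s x t c a hsum (fun i hi => hm.trans (hlow i hi)) hk
      (hdom _ (hlow k hk) hfar)

end TangentCubic

theorem cone_constant_eq (n N α : ℝ) (hN : 2 * N = (n + 2) * (n - 1)) (hn2 : n - 2 ≠ 0)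
    (hn3 : n + 3 ≠ 0) (hα : α ≠ 0) (hαN : N - α ≠ 0) :
    ((α - 1) * N + α * (N - 1) * ((n - 1) * ((n + 2) * (n + 5) - (3 * n + 8) * α)
        / (3 * α * (n + 3) * (n - 2)))) / (N - α) =
      2 * (N - 1) * (n + 5) / (3 * (n + 3) * (n - 2)) - 1 := by
  obtain rfl : N = (n + 2) * (n - 1) / 2 := by linarith
  rw [div_eq_iff hαN]
  field_simp
  ring

section Dimension

variable {ι : Type*} (s : Finset ι) (x : ι → ℝ) {t : ℝ}

theorem le_sum_cube_of_card_eq_nine (hs : #s = 9) (ht : 0 ≤ t) (hsum : ∑ i ∈ s, x i = 9 * t)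
    (hlow : ∀ i ∈ s, -(17 / 7 * t) ≤ x i) :
    72 * t ^ 3 ≤ 8 * ∑ i ∈ s, x i ^ 3 := by
  have key := card_mul_le_sum_cube_add_sq_of_le s x t 0 (10 / 7 * t) (by rw [hsum, hs]; norm_num)
    (card_pos.mp (by omega)) hlow (by linarith) fun y hy1 hy2 => by
      have hq : 81 / 49 * t ^ 2 ≤ (t - y) * (10 / 7 * t - y) := by
        nlinarith [mul_le_mul (a := 3 * t) (b := 24 / 7 * t) (c := t - y) (d := 10 / 7 * t - y)
          (by linarith) (by linarith) (by linarith) (by linarith)]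
      rw [hs]
      push_cast
      -- `φₐ(y) - 9 φₐ(t) = (y + 17t/7) ((t - y) (10t/7 - y) - 81t²/49)`
      nlinarith [mul_nonneg (neg_le_iff_add_nonneg.mp hy1) (sub_nonneg.2 hq)]
  rw [hs] at key
  push_cast at key
  linarith

theorem le_sum_cube_add_sq_of_card_eq_fourteen (hs : #s = 14) (ht : 0 ≤ t)
    (hsum : ∑ i ∈ s, x i = 14 * t) (hlow : ∀ i ∈ s, -(47 / 18 * t) ≤ x i) :
    448 / 3 * t ^ 3 ≤ 8 * ∑ i ∈ s, x i ^ 3 + 8 / 3 * t * ∑ i ∈ s, x i ^ 2 := by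
  have key := card_mul_le_sum_cube_add_sq_of_le s x t (t / 3) (23 / 18 * t)
    (by rw [hsum, hs]; norm_num) (card_pos.mp (by omega)) hlow (by linarith) fun y hy1 hy2 => by
      have hq : 175 / 162 * t ^ 2 ≤ (t - y) * (23 / 18 * t - y) := by
        nlinarith [mul_le_mul (a := 10 / 3 * t) (b := 65 / 18 * t) (c := t - y)
          (d := 23 / 18 * t - y) (by linarith) (by linarith) (by linarith) (by linarith)]
      rw [hs]
      push_cast
      -- `φₐ(y) - 14 φₐ(t) = (y + 47t/18) ((t - y) (23t/18 - y) - 175t²/162)`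
      nlinarith [mul_nonneg (neg_le_iff_add_nonneg.mp hy1) (sub_nonneg.2 hq)]
  rw [hs] at key
  push_cast at key
  linarith

end Dimension

theorem stmt_14_general (n : ℕ) (hn : n = 4 ∨ n = 5) (N : ℕ)
    (hN : 2 * N = (n + 2) * (n - 1))
    (α θ A : ℝ) (hα1 : 1 ≤ α)
    (hα2 : α ≤ ((n : ℝ) + 2) * ((n : ℝ) + 5) / (3 * (n : ℝ) + 8))
    (hθ : θ = ((n : ℝ) - 1) * (((n : ℝ) + 2) * ((n : ℝ) + 5) - (3 * (n : ℝ) + 8) * α)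
            / (3 * α * ((n : ℝ) + 3) * ((n : ℝ) - 2)))
    (hA : A = ((α - 1) * (N : ℝ) + α * ((N : ℝ) - 1) * θ) / ((N : ℝ) - α))
    (lam : ℕ → ℝ) (lamBar : ℝ)
    (hsum : ∑ i ∈ Finset.Icc 1 N, lam i = N * lamBar)
    (hbar : 0 ≤ lamBar)
    (hlow : ∀ j, 1 ≤ j → j ≤ N → lam j ≥ -(A * lamBar)) :
    0 ≤ 8 * ∑ j ∈ Finset.Icc 1 N, (lam j) ^ 3
        + (8 * ((n : ℝ) - 4) / 3) * lamBar * ∑ j ∈ Finset.Icc 1 N, (lam j) ^ 2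
        - (4 * ((n : ℝ) + 2) * ((n : ℝ) - 1) ^ 2 / 3) * lamBar ^ 3 := by
  have hlow' : ∀ j ∈ Icc 1 N, -(A * lamBar) ≤ lam j := fun j hj =>
    hlow j (mem_Icc.mp hj).1 (mem_Icc.mp hj).2
  have hα0 : α ≠ 0 := (zero_lt_one.trans_le hα1).ne'
  obtain rfl | rfl := hn
  · obtain rfl : N = 9 := by omega
    have hA' : A = 17 / 7 := by
      rw [hA, hθ, cone_constant_eq] <;> norm_num at hα2 ⊢
      exacts [hα0, by linarith]
    rw [hA'] at hlow'
    norm_num at hsum ⊢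
    exact le_sum_cube_of_card_eq_nine _ lam (by simp) hbar hsum hlow'
  · obtain rfl : N = 14 := by omega
    have hA' : A = 47 / 18 := by
      rw [hA, hθ, cone_constant_eq] <;> norm_num at hα2 ⊢
      exacts [hα0, by linarith]
    rw [hA'] at hlow'
    norm_num at hsum ⊢
    exact le_sum_cube_add_sq_of_card_eq_fourteen _ lam (by simp) hbar hsum hlow'

theorem stmt_14 (n : ℕ) (hn : n = 4 ∨ n = 5) (N : ℕ)
    (hN : 2 * N = (n + 2) * (n - 1))
    (α θ A : ℝ) (hα1 : 1 ≤ α)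
    (hα2 : α ≤ ((n : ℝ) + 2) * ((n : ℝ) + 5) / (3 * (n : ℝ) + 8))
    (hθ : θ = ((n : ℝ) - 1) * (((n : ℝ) + 2) * ((n : ℝ) + 5) - (3 * (n : ℝ) + 8) * α)
            / (3 * α * ((n : ℝ) + 3) * ((n : ℝ) - 2)))
    (hA : A = ((α - 1) * (N : ℝ) + α * ((N : ℝ) - 1) * θ) / ((N : ℝ) - α))
    (lam : ℕ → ℝ) (lamBar : ℝ)
    (hmono : ∀ i j, 1 ≤ i → i ≤ j → j ≤ N → lam i ≤ lam j)
    (hsum : ∑ i ∈ Finset.Icc 1 N, lam i = N * lamBar)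
    (hbar : 0 ≤ lamBar)
    (hlow : ∀ j, 1 ≤ j → j ≤ N → lam j ≥ -(A * lamBar)) :
    0 ≤ 8 * ∑ j ∈ Finset.Icc 1 N, (lam j) ^ 3
        + (8 * ((n : ℝ) - 4) / 3) * lamBar * ∑ j ∈ Finset.Icc 1 N, (lam j) ^ 2
        - (4 * ((n : ℝ) + 2) * ((n : ℝ) - 1) ^ 2 / 3) * lamBar ^ 3 :=
  stmt_14_general n hn N hN α θ A hα1 hα2 hθ hA lam lamBar hsum hbar hlow
end
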